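/- Let n ≥ 1 and suppose f : ℝⁿ → ℝ is bounded with |f(x)| ≤ M for some M > 0 and all x ∈ ℝⁿ. Let λ > 0, x₀ ∈ ℝⁿ and set R_{λ,M} = (2 + √2)√(M/λ). Then there exist points x₁, …, x_{n+1} in the closed ball B̄(x₀; R_{λ,M}) with x_i ≠ x₀, and coefficients λ₁, …, λ_{n+1} ≥ 0 with Σ_{i=1}^{n+1} λ_i = 1 and Σ_{i=1}^{n+1} λ_i x_i = x₀, such that C^l_λ(f)(x_i) = f̲(x_i) for every i = 1, …, n+1, where f̲ denotes the lower semicontinuous envelope of f. -/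

import Mathlib

open scoped BigOperators

/-- Convex envelope: pointwise sup of affine minorants. -/
noncomputable def convEnv {n : ℕ} (g : EuclideanSpace ℝ (Fin n) → ℝ)
    (x : EuclideanSpace ℝ (Fin n)) : ℝ :=
  sSup {a : ℝ | ∃ ℓ : EuclideanSpace ℝ (Fin n) →ᵃ[ℝ] ℝ, (∀ y, ℓ y ≤ g y) ∧ a = ℓ x}

/-- Lower compensated convex transform. -/
noncomputable def lowerT {n : ℕ} (lam : ℝ) (f : EuclideanSpace ℝ (Fin n) → ℝ)
    (x : EuclideanSpace ℝ (Fin n)) : ℝ :=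
  convEnv (fun y => f y + lam * ‖y‖ ^ 2) x - lam * ‖x‖ ^ 2

/-- Lower semicontinuous envelope: `f̲(x) = liminf_{y → x} f(y)` along the
neighbourhood filter of `x`. -/
noncomputable def lscEnv {n : ℕ} (f : EuclideanSpace ℝ (Fin n) → ℝ)
    (x : EuclideanSpace ℝ (Fin n)) : ℝ :=
  Filter.liminf f (nhds x)

/-!
Let `g = f̲ + λ|·|²`. It has the same affine minorants as `f + λ|·|²`, so `co[g]` is the
convex envelope in the definition of `C^l_λ(f)`, and `C^l_λ(f) = f̲` exactly where `co[g] = g`.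
Being convex and finite, `co[g]` has at every `p` a supporting affine minorant `ℓ`. Its contact
set `{ℓ = g}` is compact, and `p` lies in its convex hull: otherwise a small multiple of a
functional separating `p` from that hull could be added to `ℓ`, giving an affine minorant of `g`
above `co[g](p)`. Since `ℓ` lies below `λ|·|² + M` and meets `λ|·|² - M` at `p` and at each contact
point, the parallelogram law keeps the contact points within `2√2 √(M/λ)` of `p`.

Doing this at `p = x₀ ± v` with `|v| = (2 - √2) √(M/λ)` puts `x₀` in the convex hull of contact
points different from `x₀` in the ball of radius `(2 + √2) √(M/λ)`, and Carathéodory's theorem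
brings the number of points down to `n + 1`.
-/

open Filter Set Metric Topology

theorem Function.Injective.sum_extend_zero {ι κ M : Type*} [Fintype ι] [Fintype κ]
    [AddCommMonoid M] {e : ι → κ} (he : e.Injective) (g : ι → M) :
    ∑ j, Function.extend e g 0 j = ∑ i, g i :=
  (Fintype.sum_of_injective e he _ _ (fun j hj => Function.extend_apply' _ _ j hj)
    fun _ => (he.extend_apply _ _ _).symm).symm

section ConvexHull

variable {E : Type*} [AddCommGroup E] [Module ℝ E]

theorem exists_fin_convexCombination_of_mem_convexHull [FiniteDimensional ℝ E] {s : Set E}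
    {x : E} {m : ℕ} (hm : Module.finrank ℝ E + 1 ≤ m) (hx : x ∈ convexHull ℝ s) :
    ∃ (w : Fin m → ℝ) (z : Fin m → E), (∀ i, 0 ≤ w i) ∧ ∑ i, w i = 1 ∧ (∀ i, z i ∈ s) ∧
      ∑ i, w i • z i = x := by
  obtain ⟨ι, _, z, w, hzs, hind, hw0, hw1, hwz⟩ := eq_pos_convex_span_of_mem_convexHull hx
  obtain ⟨e⟩ : Nonempty (ι ↪ Fin m) := Function.Embedding.nonempty_of_card_le <|
    hind.card_le_finrank_succ.trans (by grw [Submodule.finrank_le]; simpa using hm)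
  obtain ⟨i₀⟩ : Nonempty ι := by
    by_contra h
    simp [not_nonempty_iff.1 h] at hw1
  refine ⟨Function.extend e w 0, Function.extend e z fun _ => z i₀, fun j => ?_, ?_,
    fun j => ?_, ?_⟩
  · by_cases h : ∃ i, e i = j
    · obtain ⟨i, rfl⟩ := h
      simpa [e.injective.extend_apply] using (hw0 i).le
    · simp [Function.extend_apply' _ _ _ h]
  · rw [e.injective.sum_extend_zero, hw1]
  · by_cases h : ∃ i, e i = j
    · obtain ⟨i, rfl⟩ := h
      simpa [e.injective.extend_apply] using hzs (mem_range_self i)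
    · simpa [Function.extend_apply' _ _ _ h] using hzs (mem_range_self i₀)
  · rw [← hwz, ← e.injective.sum_extend_zero]
    refine Finset.sum_congr rfl fun j _ => ?_
    by_cases h : ∃ i, e i = j
    · obtain ⟨i, rfl⟩ := h
      simp [e.injective.extend_apply]
    · simp [Function.extend_apply' _ _ _ h]

theorem isCompact_convexHull [FiniteDimensional ℝ E] [TopologicalSpace E]
    [IsTopologicalAddGroup E] [ContinuousSMul ℝ E] {K : Set E} (hK : IsCompact K) :
    IsCompact (convexHull ℝ K) := by
  set m := Module.finrank ℝ E + 1
  have himage : convexHull ℝ K = (fun p : (Fin m → ℝ) × (Fin m → E) => ∑ i, p.1 i • p.2 i) ''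
      (stdSimplex ℝ (Fin m) ×ˢ univ.pi fun _ => K) := by
    refine Subset.antisymm (fun x hx => ?_) ?_
    · obtain ⟨w, z, hw0, hw1, hzK, rfl⟩ :=
        exists_fin_convexCombination_of_mem_convexHull le_rfl hx
      exact ⟨(w, z), ⟨⟨hw0, hw1⟩, fun i _ => hzK i⟩, rfl⟩
    · rintro x ⟨⟨w, z⟩, ⟨⟨hw0, hw1⟩, hz⟩, rfl⟩
      exact (convex_convexHull ℝ K).sum_mem (fun i _ => hw0 i) hw1
        fun i _ => subset_convexHull ℝ K (hz i (mem_univ i))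
  rw [himage]
  exact ((isCompact_stdSimplex ℝ _).prod (isCompact_univ_pi fun _ => hK)).image (by fun_prop)

theorem exists_pos_add_smul_mem_convexHull_of_mem_convexHull_insert {S : Set E} {x v : E}
    (hv : v ≠ 0) (h : x + v ∈ convexHull ℝ (insert x S)) :
    ∃ r : ℝ, 0 < r ∧ x + r • v ∈ convexHull ℝ S := by
  rcases S.eq_empty_or_nonempty with rfl | hS
  · simp_all
  rw [convexHull_insert hS, mem_convexJoin] at h
  obtain ⟨y, hy, z, hz, a, b, -, hb, hab, hxv⟩ := h
  rw [mem_singleton_iff.1 hy] at hxv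
  obtain rfl : a = 1 - b := by linarith
  have hv' : v = b • (z - x) := by
    rw [← add_right_inj x, ← hxv]
    module
  have hb0 : b ≠ 0 := by
    rintro rfl
    simp_all
  refine ⟨b⁻¹, inv_pos.2 (hb.lt_of_ne' hb0), ?_⟩
  rwa [hv', smul_smul, inv_mul_cancel₀ hb0, one_smul, add_sub_cancel]

theorem mem_convexHull_of_add_sub_mem_convexHull_insert {S : Set E} {x v : E} (hv : v ≠ 0)
    (h₁ : x + v ∈ convexHull ℝ (insert x S)) (h₂ : x - v ∈ convexHull ℝ (insert x S)) :
    x ∈ convexHull ℝ S := by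
  obtain ⟨r, hr, hxr⟩ := exists_pos_add_smul_mem_convexHull_of_mem_convexHull_insert hv h₁
  obtain ⟨s, hs, hxs⟩ := exists_pos_add_smul_mem_convexHull_of_mem_convexHull_insert
    (neg_ne_zero.2 hv) (by rwa [← sub_eq_add_neg])
  have hrs : 0 < r + s := by linarith
  convert (convex_convexHull ℝ S) hxr hxs (div_pos hs hrs).le (div_pos hr hrs).le
    (by field_simp; ring) using 1
  match_scalars <;> field_simp <;> ring

end ConvexHull

section LowerSemicontinuous

variable {α : Type*} [TopologicalSpace α] {G : α → ℝ}

theorem LowerSemicontinuous.isCompact_preimage_Iic (hG : LowerSemicontinuous G) {a : ℝ}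
    (h : ∀ᶠ y in cocompact α, a < G y) : IsCompact (G ⁻¹' Iic a) := by
  obtain ⟨C, hC, hCG⟩ := mem_cocompact.1 h
  refine hC.of_isClosed_subset (hG.isClosed_preimage a) fun y (hy : G y ≤ a) => ?_
  by_contra hyC
  exact (hCG hyC).not_ge hy

theorem IsCompact.exists_pos_forall_le {K : Set α} (hK : IsCompact K)
    (hG : LowerSemicontinuousOn G K) (hpos : ∀ y ∈ K, 0 < G y) :
    ∃ m, 0 < m ∧ ∀ y ∈ K, m ≤ G y := by
  rcases K.eq_empty_or_nonempty with rfl | hne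
  · exact ⟨1, one_pos, by simp⟩
  obtain ⟨a, ha, hmin⟩ := hG.exists_isMinOn hne hK
  exact ⟨G a, hpos a ha, hmin⟩

theorem LowerSemicontinuous.exists_pos_mul_le (hG : LowerSemicontinuous G) (hG0 : ∀ y, 0 ≤ G y)
    {h : α → ℝ} (hh : Continuous h) (hgrowth : ∀ᶠ y in cocompact α, h y ≤ G y)
    (hpos : ∀ y, 0 ≤ h y → 0 < G y) : ∃ t, 0 < t ∧ ∀ y, t * h y ≤ G y := by
  obtain ⟨C, hC, hCG⟩ := mem_cocompact.1 hgrowth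
  set Q := C ∩ {y | 0 ≤ h y}
  have hQ : IsCompact Q := hC.inter_right (isClosed_le continuous_const hh)
  obtain ⟨m, hm, hmQ⟩ :=
    hQ.exists_pos_forall_le (hG.lowerSemicontinuousOn Q) fun y hy => hpos y hy.2
  obtain ⟨B, hB⟩ := hQ.bddAbove_image hh.continuousOn
  have hB1 : 0 < max B 1 := by positivity
  set t := min 1 (m / max B 1)
  have ht : 0 < t := lt_min one_pos (div_pos hm hB1)
  have ht1 : t ≤ 1 := min_le_left _ _
  have htB : t * max B 1 ≤ m := (le_div_iff₀ hB1).1 (min_le_right _ _)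
  refine ⟨t, ht, fun y => ?_⟩
  rcases le_or_gt (h y) 0 with hy | hy
  · nlinarith [hG0 y]
  by_cases hyC : y ∈ C
  · have hyB : h y ≤ max B 1 := (hB ⟨y, ⟨hyC, hy.le⟩, rfl⟩).trans (le_max_left _ _)
    nlinarith [hmQ y ⟨hyC, hy.le⟩]
  · have hyG : h y ≤ G y := hCG hyC
    nlinarith

end LowerSemicontinuous

section FiniteDimensional

variable {E : Type*} [NormedAddCommGroup E] [NormedSpace ℝ E] [FiniteDimensional ℝ E]

theorem ConvexOn.exists_affineMap_le_eq {φ : E → ℝ} (hφ : ConvexOn ℝ univ φ) (p : E) :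
    ∃ ℓ : E →ᵃ[ℝ] ℝ, (∀ y, ℓ y ≤ φ y) ∧ ℓ p = φ p := by
  have hcont : Continuous φ := continuousOn_univ.1 (hφ.continuousOn isOpen_univ)
  have hopen : IsOpen {q : E × ℝ | q.1 ∈ univ ∧ φ q.1 < q.2} := by
    simpa only [mem_univ, true_and] using
      isOpen_lt (by fun_prop : Continuous fun q : E × ℝ => φ q.1) continuous_snd
  obtain ⟨F, hF⟩ := geometric_hahn_banach_open_point hφ.convex_strict_epigraph hopen
    (x := (p, φ p)) (by simp)
  set c := F (0, 1)
  set g := F.comp (ContinuousLinearMap.inl ℝ E ℝ)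
  have hF_apply (y : E) (t : ℝ) : F (y, t) = g y + t * c := by
    have : ((y, t) : E × ℝ) = (y, 0) + t • ((0 : E), (1 : ℝ)) := by simp
    rw [this, map_add, map_smul, smul_eq_mul]
    rfl
  have hc : 0 < -c := by
    have := hF (p, φ p + 1) (by simp)
    rw [hF_apply, hF_apply p (φ p)] at this
    linarith
  have hinv : (-c)⁻¹ * -c = 1 := inv_mul_cancel₀ hc.ne'
  refine ⟨((-c)⁻¹ • g).toLinearMap.toAffineMap + AffineMap.const ℝ E (φ p - (-c)⁻¹ * g p),
    fun y => le_of_forall_gt_imp_ge_of_dense fun t ht => ?_, by simp⟩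
  have := hF (y, t) (by simpa using ht)
  rw [hF_apply, hF_apply p (φ p)] at this
  have := mul_lt_mul_of_pos_left this (inv_pos.2 hc)
  simp only [AffineMap.coe_add, LinearMap.coe_toAffineMap, AffineMap.coe_const, Pi.add_apply,
    ContinuousLinearMap.coe_coe, FunLike.coe_smul, Pi.smul_apply, smul_eq_mul,
    Function.const_apply]
  linear_combination this + (t - φ p) * hinv

theorem mem_convexHull_setOf_eq_zero {G : E → ℝ} (hG : LowerSemicontinuous G)
    (hG0 : ∀ y, 0 ≤ G y) (hgrowth : ∀ h : E →ᵃ[ℝ] ℝ, ∀ᶠ y in cocompact E, h y ≤ G y) {p : E}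
    (hp : ∀ h : E →ᵃ[ℝ] ℝ, (∀ y, h y ≤ G y) → h p ≤ 0) :
    p ∈ convexHull ℝ {y | G y = 0} := by
  have hK : {y | G y = 0} = G ⁻¹' Iic 0 := by
    ext y
    simp [le_antisymm_iff, hG0 y]
  have hKcompact : IsCompact {y | G y = 0} := hK ▸ hG.isCompact_preimage_Iic <|
    (hgrowth (AffineMap.const ℝ E 1)).mono fun y hy => one_pos.trans_le hy
  by_contra hpK
  obtain ⟨F, u, hFK, hFp⟩ := geometric_hahn_banach_closed_point (convex_convexHull ℝ _)
    (isCompact_convexHull hKcompact).isClosed hpK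
  set h : E →ᵃ[ℝ] ℝ := F.toLinearMap.toAffineMap - AffineMap.const ℝ E u
  have h_apply (y : E) : h y = F y - u := rfl
  obtain ⟨t, ht, htG⟩ := hG.exists_pos_mul_le hG0 h.continuous_of_finiteDimensional (hgrowth h)
    fun y hy => (hG0 y).lt_of_ne fun hy0 => by
      linarith [hFK y (subset_convexHull ℝ _ hy0.symm), h_apply y]
  have := hp (t • h) fun y => by simpa using htG y
  simp only [AffineMap.coe_smul, Pi.smul_apply, smul_eq_mul, h_apply] at this
  nlinarith

theorem eventually_cocompact_affineMap_le_mul_norm_sq {lam : ℝ} (hlam : 0 < lam)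
    (h : E →ᵃ[ℝ] ℝ) : ∀ᶠ y in cocompact E, h y ≤ lam * ‖y‖ ^ 2 := by
  set L := LinearMap.toContinuousLinearMap h.linear
  have hbound (y : E) : h y ≤ ‖L‖ * ‖y‖ + |h 0| := by
    rw [congrFun h.decomp y]
    exact add_le_add ((le_abs_self _).trans (L.le_opNorm y)) (le_abs_self _)
  filter_upwards [tendsto_norm_cocompact_atTop.eventually_ge_atTop ((‖L‖ + |h 0|) / lam + 1)]
    with y hy
  have h1 : ‖L‖ + |h 0| ≤ lam * (‖y‖ - 1) := by
    rw [← div_le_iff₀' hlam]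
    linarith
  nlinarith [hbound y, norm_nonneg L, abs_nonneg (h 0)]

end FiniteDimensional

theorem norm_sub_le_of_affineMap_le {E : Type*} [NormedAddCommGroup E] [InnerProductSpace ℝ E]
    {ℓ : E →ᵃ[ℝ] ℝ} {lam M : ℝ} (hlam : 0 < lam) (hℓ : ∀ z, ℓ z ≤ lam * ‖z‖ ^ 2 + M) {x y : E}
    (hx : lam * ‖x‖ ^ 2 - M ≤ ℓ x) (hy : lam * ‖y‖ ^ 2 - M ≤ ℓ y) :
    ‖x - y‖ ≤ 2 * √2 * √(M / lam) := by
  have hmid : ℓ (midpoint ℝ x y) = (ℓ x + ℓ y) / 2 := by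
    rw [ℓ.map_midpoint, midpoint_eq_smul_add, smul_eq_mul, invOf_eq_inv]
    ring
  have hnorm : ‖midpoint ℝ x y‖ ^ 2 = (‖x‖ ^ 2 + ‖y‖ ^ 2) / 2 - ‖x - y‖ ^ 2 / 4 := by
    rw [midpoint_eq_smul_add, norm_smul, mul_pow, invOf_eq_inv, norm_inv, Real.norm_two]
    linarith [parallelogram_law_with_norm ℝ x y]
  have hM : 0 ≤ M := by linarith [hℓ x]
  have hsq : (2 * √2 * √(M / lam)) ^ 2 = 8 * M / lam := by
    rw [mul_pow, mul_pow, Real.sq_sqrt zero_le_two, Real.sq_sqrt (div_nonneg hM hlam.le)]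
    ring
  refine (pow_le_pow_iff_left₀ (norm_nonneg _) (by positivity) two_ne_zero).1 ?_
  have := hℓ (midpoint ℝ x y)
  rw [hmid, hnorm] at this
  rw [hsq, le_div_iff₀ hlam]
  linarith

section ConvexEnvelope

variable {n : ℕ} {g : EuclideanSpace ℝ (Fin n) → ℝ}

theorem le_convEnv {ℓ : EuclideanSpace ℝ (Fin n) →ᵃ[ℝ] ℝ} (hℓ : ∀ y, ℓ y ≤ g y)
    (x : EuclideanSpace ℝ (Fin n)) : ℓ x ≤ convEnv g x :=
  le_csSup ⟨g x, by rintro _ ⟨ℓ', hℓ', rfl⟩; exact hℓ' x⟩ ⟨ℓ, hℓ, rfl⟩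

theorem convEnv_le_of_forall (hg : ∃ ℓ : EuclideanSpace ℝ (Fin n) →ᵃ[ℝ] ℝ, ∀ y, ℓ y ≤ g y)
    {x : EuclideanSpace ℝ (Fin n)} {b : ℝ}
    (h : ∀ ℓ : EuclideanSpace ℝ (Fin n) →ᵃ[ℝ] ℝ, (∀ y, ℓ y ≤ g y) → ℓ x ≤ b) :
    convEnv g x ≤ b := by
  obtain ⟨ℓ₀, hℓ₀⟩ := hg
  exact csSup_le ⟨_, ℓ₀, hℓ₀, rfl⟩ (by rintro _ ⟨ℓ, hℓ, rfl⟩; exact h ℓ hℓ)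

theorem convEnv_le_self (hg : ∃ ℓ : EuclideanSpace ℝ (Fin n) →ᵃ[ℝ] ℝ, ∀ y, ℓ y ≤ g y)
    (x : EuclideanSpace ℝ (Fin n)) : convEnv g x ≤ g x :=
  convEnv_le_of_forall hg fun _ hℓ => hℓ x

theorem convexOn_convEnv (hg : ∃ ℓ : EuclideanSpace ℝ (Fin n) →ᵃ[ℝ] ℝ, ∀ y, ℓ y ≤ g y) :
    ConvexOn ℝ univ (convEnv g) := by
  refine ⟨convex_univ, fun x _ y _ a b ha hb hab => convEnv_le_of_forall hg fun ℓ hℓ => ?_⟩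
  rw [Convex.combo_affine_apply hab, smul_eq_mul, smul_eq_mul, smul_eq_mul, smul_eq_mul]
  gcongr
  exacts [le_convEnv hℓ x, le_convEnv hℓ y]

theorem convEnv_congr {g' : EuclideanSpace ℝ (Fin n) → ℝ}
    (h : ∀ ℓ : EuclideanSpace ℝ (Fin n) →ᵃ[ℝ] ℝ, (∀ y, ℓ y ≤ g y) ↔ ∀ y, ℓ y ≤ g' y) :
    convEnv g = convEnv g' := by
  funext x
  simp only [convEnv, h]

theorem exists_affineMap_le_eq_convEnv
    (hg : ∃ ℓ : EuclideanSpace ℝ (Fin n) →ᵃ[ℝ] ℝ, ∀ y, ℓ y ≤ g y)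
    (p : EuclideanSpace ℝ (Fin n)) :
    ∃ ℓ : EuclideanSpace ℝ (Fin n) →ᵃ[ℝ] ℝ, (∀ y, ℓ y ≤ g y) ∧ ℓ p = convEnv g p := by
  obtain ⟨ℓ, hℓ, hℓp⟩ := (convexOn_convEnv hg).exists_affineMap_le_eq p
  exact ⟨ℓ, fun y => (hℓ y).trans (convEnv_le_self hg y), hℓp⟩

theorem ConvexOn.le_convEnv {φ : EuclideanSpace ℝ (Fin n) → ℝ} (hφ : ConvexOn ℝ univ φ)
    (hφg : ∀ y, φ y ≤ g y) (x : EuclideanSpace ℝ (Fin n)) : φ x ≤ convEnv g x := by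
  obtain ⟨ℓ, hℓ, hℓx⟩ := hφ.exists_affineMap_le_eq x
  exact hℓx ▸ _root_.le_convEnv (fun y => (hℓ y).trans (hφg y)) x

theorem mem_convexHull_setOf_affineMap_eq (hg : LowerSemicontinuous g)
    (hgrowth : ∀ h : EuclideanSpace ℝ (Fin n) →ᵃ[ℝ] ℝ, ∀ᶠ y in cocompact _, h y ≤ g y)
    {ℓ : EuclideanSpace ℝ (Fin n) →ᵃ[ℝ] ℝ} (hℓ : ∀ y, ℓ y ≤ g y)
    {p : EuclideanSpace ℝ (Fin n)} (hp : ℓ p = convEnv g p) :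
    p ∈ convexHull ℝ {y | ℓ y = g y} := by
  have hG : LowerSemicontinuous fun y => g y - ℓ y := by
    simp_rw [sub_eq_add_neg]
    exact hg.add ℓ.continuous_of_finiteDimensional.neg.lowerSemicontinuous
  have hGgrowth (h : EuclideanSpace ℝ (Fin n) →ᵃ[ℝ] ℝ) :
      ∀ᶠ y in cocompact _, h y ≤ g y - ℓ y :=
    (hgrowth (h + ℓ)).mono fun y hy => by
      simp only [AffineMap.coe_add, Pi.add_apply] at hy
      linarith
  have hGp (h : EuclideanSpace ℝ (Fin n) →ᵃ[ℝ] ℝ) (hh : ∀ y, h y ≤ g y - ℓ y) : h p ≤ 0 := by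
    have := le_convEnv (g := g) (ℓ := h + ℓ) (fun y => by
      simp only [AffineMap.coe_add, Pi.add_apply]
      linarith [hh y]) p
    rw [← hp] at this
    simp only [AffineMap.coe_add, Pi.add_apply] at this
    linarith
  convert mem_convexHull_setOf_eq_zero hG (fun y => sub_nonneg.2 (hℓ y)) hGgrowth hGp using 2
  ext y
  exact eq_comm.trans sub_eq_zero.symm

end ConvexEnvelope

section LowerSemicontinuousEnvelope

variable {n : ℕ} {f : EuclideanSpace ℝ (Fin n) → ℝ}

theorem le_lscEnv_of_eventually_le {x : EuclideanSpace ℝ (Fin n)} {a : ℝ}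
    (h : ∀ᶠ y in 𝓝 x, a ≤ f y) : a ≤ lscEnv f x := by
  rw [lscEnv, liminf_eq]
  exact le_csSup ⟨f x, fun _ hb => hb.self_of_nhds⟩ h

theorem le_lscEnv_of_continuous {u : EuclideanSpace ℝ (Fin n) → ℝ} (hu : Continuous u)
    (huf : ∀ y, u y ≤ f y) (x : EuclideanSpace ℝ (Fin n)) : u x ≤ lscEnv f x :=
  le_of_forall_sub_le fun _ hε => le_lscEnv_of_eventually_le <|
    ((hu.tendsto x).eventually (Ioi_mem_nhds (sub_lt_self _ hε))).mono fun y hy =>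
      (le_of_lt hy).trans (huf y)

theorem lscEnv_le_self {m : ℝ} (hf : ∀ x, m ≤ f x) (x : EuclideanSpace ℝ (Fin n)) :
    lscEnv f x ≤ f x := by
  rw [lscEnv, liminf_eq]
  exact csSup_le ⟨m, .of_forall hf⟩ fun _ ha => ha.self_of_nhds

theorem lowerSemicontinuous_lscEnv {m : ℝ} (hf : ∀ x, m ≤ f x) :
    LowerSemicontinuous (lscEnv f) := by
  intro x b hb
  rw [lscEnv, liminf_eq] at hb
  obtain ⟨a, ha, hba⟩ := exists_lt_of_lt_csSup ⟨m, .of_forall hf⟩ hb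
  filter_upwards [Filter.Eventually.eventually_nhds ha] with y hy
  exact hba.trans_le (le_lscEnv_of_eventually_le hy)

theorem convEnv_lscEnv_add {m : ℝ} (hf : ∀ x, m ≤ f x) (lam : ℝ) :
    convEnv (fun y => lscEnv f y + lam * ‖y‖ ^ 2) = convEnv (fun y => f y + lam * ‖y‖ ^ 2) := by
  refine convEnv_congr fun ℓ => ⟨fun h y => (h y).trans ?_, fun h y => ?_⟩
  · gcongr
    exact lscEnv_le_self hf y
  · have hcont : Continuous fun y => ℓ y - lam * ‖y‖ ^ 2 := by
      have := ℓ.continuous_of_finiteDimensional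
      fun_prop
    have := le_lscEnv_of_continuous (f := f) hcont (fun y => by linarith [h y]) y
    linarith

end LowerSemicontinuousEnvelope

theorem mem_convexHull_setOf_lowerT_eq_lscEnv {n : ℕ} {f : EuclideanSpace ℝ (Fin n) → ℝ}
    {M lam : ℝ} (hf : ∀ x, |f x| ≤ M) (hlam : 0 < lam) (p : EuclideanSpace ℝ (Fin n)) :
    p ∈ convexHull ℝ
      {y | lowerT lam f y = lscEnv f y ∧ ‖y - p‖ ≤ 2 * √2 * √(M / lam)} := by
  have hfM (x : EuclideanSpace ℝ (Fin n)) : -M ≤ f x := (abs_le.1 (hf x)).1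
  set g := fun y => lscEnv f y + lam * ‖y‖ ^ 2
  have hg_lower (y : EuclideanSpace ℝ (Fin n)) : lam * ‖y‖ ^ 2 - M ≤ g y := by
    linarith [le_lscEnv_of_continuous continuous_const hfM y]
  have hg_upper (y : EuclideanSpace ℝ (Fin n)) : g y ≤ lam * ‖y‖ ^ 2 + M := by
    linarith [lscEnv_le_self hfM y, (abs_le.1 (hf y)).2]
  have hg_minorant : ∃ ℓ : EuclideanSpace ℝ (Fin n) →ᵃ[ℝ] ℝ, ∀ y, ℓ y ≤ g y :=
    ⟨AffineMap.const ℝ _ (-M), fun y => by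
      simp only [AffineMap.const_apply]
      nlinarith [hg_lower y, sq_nonneg ‖y‖]⟩
  have hgrowth (h : EuclideanSpace ℝ (Fin n) →ᵃ[ℝ] ℝ) : ∀ᶠ y in cocompact _, h y ≤ g y :=
    (eventually_cocompact_affineMap_le_mul_norm_sq hlam (h + AffineMap.const ℝ _ M)).mono
      fun y hy => by
        simp only [AffineMap.coe_add, AffineMap.coe_const, Pi.add_apply, Function.const_apply] at hy
        linarith [hg_lower y]
  have hparabola : ConvexOn ℝ univ fun y : EuclideanSpace ℝ (Fin n) => lam * ‖y‖ ^ 2 - M := by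
    have hnorm : ConvexOn ℝ univ fun y : EuclideanSpace ℝ (Fin n) => ‖y‖ :=
      convexOn_norm convex_univ
    exact (((hnorm.pow (fun y _ => norm_nonneg y) 2).smul hlam.le).add_const (-M)).congr
      fun y _ => by simp [sub_eq_add_neg]
  have hg_lsc : LowerSemicontinuous g := (lowerSemicontinuous_lscEnv hfM).add
    (by fun_prop : Continuous fun y : EuclideanSpace ℝ (Fin n) => lam * ‖y‖ ^ 2).lowerSemicontinuous
  obtain ⟨ℓ, hℓ, hℓp⟩ := exists_affineMap_le_eq_convEnv hg_minorant p
  refine convexHull_mono ?_ (mem_convexHull_setOf_affineMap_eq hg_lsc hgrowth hℓ hℓp)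
  rintro y (hy : ℓ y = g y)
  refine ⟨?_, ?_⟩
  · have : convEnv g y = g y :=
      le_antisymm (convEnv_le_self hg_minorant y) (hy ▸ le_convEnv hℓ y)
    rw [lowerT, ← convEnv_lscEnv_add hfM, this]
    ring
  · exact norm_sub_le_of_affineMap_le hlam (fun z => (hℓ z).trans (hg_upper z))
      (hy ▸ hg_lower y) (hℓp ▸ hparabola.le_convEnv hg_lower p)

theorem mem_convexHull_setOf_ne_lowerT_eq_lscEnv {n : ℕ} (hn : 1 ≤ n)
    {f : EuclideanSpace ℝ (Fin n) → ℝ} {M lam : ℝ} (hM : 0 < M) (hf : ∀ x, |f x| ≤ M)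
    (hlam : 0 < lam) (x₀ : EuclideanSpace ℝ (Fin n)) :
    x₀ ∈ convexHull ℝ {y | y ≠ x₀ ∧ y ∈ closedBall x₀ ((2 + √2) * √(M / lam)) ∧
      lowerT lam f y = lscEnv f y} := by
  set D := √(M / lam)
  have hδ : 0 < (2 - √2) * D := mul_pos (by
    rw [sub_pos, Real.sqrt_lt' two_pos]
    norm_num) (Real.sqrt_pos.2 (div_pos hM hlam))
  have : Nonempty (Fin n) := ⟨⟨0, hn⟩⟩
  obtain ⟨v, hv⟩ := exists_norm_eq (EuclideanSpace ℝ (Fin n)) hδ.le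
  have hcontact (p) (hp : ‖p - x₀‖ = ‖v‖) : p ∈ convexHull ℝ (insert x₀
      {y | y ≠ x₀ ∧ y ∈ closedBall x₀ ((2 + √2) * D) ∧ lowerT lam f y = lscEnv f y}) := by
    refine convexHull_mono ?_ (mem_convexHull_setOf_lowerT_eq_lscEnv hf hlam p)
    rintro y ⟨hy, hpy⟩
    by_cases hyx : y = x₀
    · exact .inl hyx
    refine .inr ⟨hyx, ?_, hy⟩
    calc dist y x₀ ≤ dist y p + dist p x₀ := dist_triangle _ _ _
      _ ≤ 2 * √2 * D + (2 - √2) * D := by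
        rw [dist_eq_norm, dist_eq_norm, hp, hv]
        exact add_le_add_left hpy _
      _ = (2 + √2) * D := by ring
  exact mem_convexHull_of_add_sub_mem_convexHull_insert (norm_pos_iff.1 (hv ▸ hδ))
    (hcontact _ (by simp)) (hcontact _ (by simp))

/-- Density theorem for the lower compensated convex transform. -/
theorem lowerT_density (n : ℕ) (hn : 1 ≤ n)
    (f : EuclideanSpace ℝ (Fin n) → ℝ) (M : ℝ) (hM : 0 < M) (hf : ∀ x, |f x| ≤ M)
    (lam : ℝ) (hlam : 0 < lam) (x₀ : EuclideanSpace ℝ (Fin n)) :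
    ∃ (xs : Fin (n + 1) → EuclideanSpace ℝ (Fin n)) (c : Fin (n + 1) → ℝ),
      (∀ i, xs i ∈ Metric.closedBall x₀ ((2 + Real.sqrt 2) * Real.sqrt (M / lam))) ∧
      (∀ i, xs i ≠ x₀) ∧ (∀ i, 0 ≤ c i) ∧
      (∑ i, c i) = 1 ∧ (∑ i, c i • xs i) = x₀ ∧
      ∀ i, lowerT lam f (xs i) = lscEnv f (xs i) := by
  obtain ⟨c, xs, hc0, hc1, hxs, hsum⟩ := exists_fin_convexCombination_of_mem_convexHull
    (m := n + 1) (by simp) (mem_convexHull_setOf_ne_lowerT_eq_lscEnv hn hM hf hlam x₀)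
  exact ⟨xs, c, fun i => (hxs i).2.1, fun i => (hxs i).1, hc0, hc1, hsum, fun i => (hxs i).2.2⟩
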